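/- The number of critical 1-cells of UD^4(T_min) with respect to the Morse matching is exactly 24: there are 4 choices of disrespectful edge, each forcing one blocked vertex, and 6 ways to distribute the remaining 2 indistinguishable vertices among the 3 components of the tree minus the terminal vertex of the edge. -/
import Mathlib


attribute [local instance] Classical.propDecidable

/-- `u` is a descendant of `v` in the rooted tree with parent function `p`. -/
def Desc {m : ℕ} (p : Fin (m + 1) → Fin (m + 1)) (u v : Fin (m + 1)) : Prop :=
  ∃ k : ℕ, p^[k] u = v

/-- A finite tree, rooted at the degree-one vertex `0`, whose vertices `Fin (m + 1)` are ordered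
by first encounter in a depth-first traversal induced by a planar embedding: each
non-root vertex `v` has a parent `p v < v`, the root is fixed, the set of descendants of
any vertex is an interval (the characteristic property of depth-first orders), and the
root has degree one (its only child is the vertex `1`). -/
structure OrderedTree (m : ℕ) where
  /-- the parent function; the edges of the tree are the pairs `(v, p v)`, `v ≠ 0` -/
  p : Fin (m + 1) → Fin (m + 1)
  root_fix : p 0 = 0
  parent_lt : ∀ v : Fin (m + 1), v ≠ 0 → p v < v
  dfs_interval : ∀ v u w : Fin (m + 1), Desc p u v → v ≤ w → w ≤ u → Desc p w v
  root_deg_one : ∀ v : Fin (m + 1), v ≠ 0 → p v = 0 → v = 1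

/-- A cell of the discretized unordered configuration space `UD^n(T)` of the tree `T`:
`n` closed cells (edges and vertices) with pairwise disjoint closures.  An edge is
recorded by its larger endpoint `e` (so the edge is `[p e, e]`, with initial vertex
`ι(e) = e` and terminal vertex `τ(e) = p e`). -/
structure TCell (m n : ℕ) (T : OrderedTree m) where
  /-- the edges of the cell, each recorded by its child (= larger) endpoint -/
  edges : Finset (Fin (m + 1))
  /-- the vertices of the cell -/
  verts : Finset (Fin (m + 1))
  edges_ne_root : ∀ e ∈ edges, e ≠ 0
  card_eq : edges.card + verts.card = n
  vert_not_on_edge : ∀ e ∈ edges, ∀ v ∈ verts, v ≠ e ∧ v ≠ T.p e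
  edges_disjoint : ∀ e ∈ edges, ∀ e' ∈ edges, e ≠ e' → e ≠ T.p e' ∧ T.p e ≠ T.p e'

/-- A vertex `v` of the cell `c` is blocked if `v` is the root, or if the edge of `T`
whose initial (larger) endpoint is `v` meets another member of `c`, i.e. the parent of
`v` is a vertex of `c` or lies on an edge of `c`. -/
def Blocked {m n : ℕ} {T : OrderedTree m} (c : TCell m n T) (v : Fin (m + 1)) : Prop :=
  v = 0 ∨ T.p v ∈ c.verts ∨ T.p v ∈ c.edges ∨ ∃ e ∈ c.edges, T.p e = T.p v

/-- An edge `e` of the cell `c` is disrespectful if some vertex `v` of `c` adjacent to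
`τ(e) = p e` satisfies `τ(e) < v < ι(e) = e`; otherwise it is respectful. -/
def Disrespectful {m n : ℕ} {T : OrderedTree m} (c : TCell m n T) (e : Fin (m + 1)) : Prop :=
  ∃ v ∈ c.verts, T.p v = T.p e ∧ T.p e < v ∧ v < e

/-- A cell is critical (for the Morse matching `W`) if it has no unblocked vertices and
no respectful edges. -/
def Critical {m n : ℕ} {T : OrderedTree m} (c : TCell m n T) : Prop :=
  (∀ v ∈ c.verts, Blocked c v) ∧ (∀ e ∈ c.edges, Disrespectful c e)

/-- A cell is redundant (in the domain of the Morse matching `W`) if it has an unblocked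
vertex which occurs, in the order, before all of the respectful edges of the cell. -/
def Redundant {m n : ℕ} {T : OrderedTree m} (c : TCell m n T) : Prop :=
  ∃ v ∈ c.verts, ¬ Blocked c v ∧ ∀ e ∈ c.edges, ¬ Disrespectful c e → v < e

/-- `v` lies on (the closure of) one of the edges in `E`. -/
def OnEdges {m : ℕ} (T : OrderedTree m) (E : Finset (Fin (m + 1))) (v : Fin (m + 1)) : Prop :=
  ∃ e ∈ E, v = e ∨ v = T.p e

/-- Two vertices lie in the same connected component of `T` minus the closed edges
recorded in `E`. -/
def ReachOff {m : ℕ} (T : OrderedTree m) (E : Finset (Fin (m + 1))) (u w : Fin (m + 1)) : Prop :=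
  Relation.ReflTransGen
    (fun a b => ¬ OnEdges T E a ∧ ¬ OnEdges T E b ∧
      ((a ≠ 0 ∧ b = T.p a) ∨ (b ≠ 0 ∧ a = T.p b))) u w

/-- Two cells are equivalent if they have the same edge set and equal numbers of vertices
in each connected component of `T` minus the edges. -/
def TCellEquiv {m n : ℕ} {T : OrderedTree m} (c c' : TCell m n T) : Prop :=
  c.edges = c'.edges ∧ ∀ w : Fin (m + 1),
    (c.verts.filter fun v => ReachOff T c.edges v w).card =
    (c'.verts.filter fun v => ReachOff T c'.edges v w).card

/-- `c'` is a face of `c`: it is obtained by replacing some edges of `c` by one of their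
endpoints. -/
def TIsFace {m n : ℕ} {T : OrderedTree m} (c' c : TCell m n T) : Prop :=
  c'.edges ⊆ c.edges ∧ c.verts ⊆ c'.verts ∧
    ∀ v ∈ c'.verts, v ∉ c.verts → ∃ e ∈ c.edges, e ∉ c'.edges ∧ (v = e ∨ v = T.p e)

/-- The face-induced partial order on equivalence classes of cells. -/
def TClassLe {m n : ℕ} {T : OrderedTree m} (c c₁ : TCell m n T) : Prop :=
  ∃ d d₁ : TCell m n T, TCellEquiv d c ∧ TCellEquiv d₁ c₁ ∧ TIsFace d d₁

/-- The parent function of the minimal nonlinear tree `T_min`, sufficiently subdivided for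
4 strands, with its depth-first vertex order: the root is `0`; the essential vertices are
`3, 9, 12, 21`; the central essential vertex `9` joins three paths ending at the
peripheral essential vertices `3`, `12` and `21`, each of which carries two further arms
of length 3. -/
def pTmin : Fin 28 → Fin 28 := fun v =>
  if v = 0 then 0
  else if v = 7 then 3
  else if v = 10 then 9
  else if v = 13 then 12
  else if v = 16 then 12
  else if v = 19 then 9
  else if v = 22 then 21
  else if v = 25 then 21
  else v - 1


/-! ### Auxiliary material for the proof -/

attribute [-instance] Classical.propDecidable

set_option maxHeartbeats 4000000
set_option synthInstance.maxHeartbeats 1000000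
set_option synthInstance.maxSize 2048

/-- Extensionality for cells: a cell is determined by its edges and vertices. -/
theorem TCell.ext' {m n : ℕ} {T : OrderedTree m} {c c' : TCell m n T}
    (h1 : c.edges = c'.edges) (h2 : c.verts = c'.verts) : c = c' := by
  cases c; cases c'
  cases h1; cases h2
  rfl

/-- The data (edge set, vertex set) of the 24 critical 1-cells of `UD^4(T_min)`. -/
def pairsTmin : List (Finset (Fin 28) × Finset (Fin 28)) :=
  [({7}, {4, 0, 1}), ({7}, {4, 5, 6}), ({7}, {4, 8, 9}),
   ({7}, {4, 0, 5}), ({7}, {4, 0, 8}), ({7}, {4, 5, 8}),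
   ({16}, {13, 0, 1}), ({16}, {13, 14, 15}), ({16}, {13, 17, 18}),
   ({16}, {13, 0, 14}), ({16}, {13, 0, 17}), ({16}, {13, 14, 17}),
   ({19}, {10, 0, 1}), ({19}, {10, 11, 12}), ({19}, {10, 20, 21}),
   ({19}, {10, 0, 11}), ({19}, {10, 0, 20}), ({19}, {10, 11, 20}),
   ({25}, {22, 0, 1}), ({25}, {22, 23, 24}), ({25}, {22, 26, 27}),
   ({25}, {22, 0, 23}), ({25}, {22, 0, 26}), ({25}, {22, 23, 26})]

def pdatTmin (i : Fin 24) : Finset (Fin 28) × Finset (Fin 28) :=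
  pairsTmin.get (Fin.cast (by rfl) i)

lemma pdatTmin_inj : ∀ i j : Fin 24, pdatTmin i = pdatTmin j → i = j := by decide

/-- The only possible (edge, disrespectful witness) pairs in `T_min`. -/
lemma forcedPairs : ∀ e w : Fin 28, pTmin w = pTmin e → pTmin e < w → w < e →
    (e = 7 ∧ w = 4) ∨ (e = 16 ∧ w = 13) ∨ (e = 19 ∧ w = 10) ∨ (e = 25 ∧ w = 22) := by
  decide

/-- Classification of fully blocked vertex configurations for each disrespectful edge. -/
lemma keyAll : ∀ e w : Fin 28,
    ((e = 7 ∧ w = 4) ∨ (e = 16 ∧ w = 13) ∨ (e = 19 ∧ w = 10) ∨ (e = 25 ∧ w = 22)) →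
    ∀ b c : Fin 28, b ≠ c → b ≠ w → c ≠ w →
    b ≠ e → b ≠ pTmin e → c ≠ e → c ≠ pTmin e →
    (b = 0 ∨ pTmin b = w ∨ pTmin b = b ∨ pTmin b = c ∨ pTmin b = e ∨ pTmin e = pTmin b) →
    (c = 0 ∨ pTmin c = w ∨ pTmin c = b ∨ pTmin c = c ∨ pTmin c = e ∨ pTmin e = pTmin c) →
    ((({e} : Finset (Fin 28)), ({w, b, c} : Finset (Fin 28))) ∈ pairsTmin) := by
  rintro e w (⟨rfl, rfl⟩ | ⟨rfl, rfl⟩ | ⟨rfl, rfl⟩ | ⟨rfl, rfl⟩) <;> decide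

/-- All 24 listed cells satisfy the cell axioms and are critical 1-cells. -/
lemma critAll : ∀ i : Fin 24,
    (∀ e ∈ (pdatTmin i).1, e ≠ 0) ∧
    ((pdatTmin i).1.card + (pdatTmin i).2.card = 4) ∧
    (∀ e ∈ (pdatTmin i).1, ∀ v ∈ (pdatTmin i).2, v ≠ e ∧ v ≠ pTmin e) ∧
    (∀ e ∈ (pdatTmin i).1, ∀ e' ∈ (pdatTmin i).1, e ≠ e' →
      e ≠ pTmin e' ∧ pTmin e ≠ pTmin e') ∧
    (∀ v ∈ (pdatTmin i).2, v = 0 ∨ pTmin v ∈ (pdatTmin i).2 ∨ pTmin v ∈ (pdatTmin i).1 ∨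
      ∃ e ∈ (pdatTmin i).1, pTmin e = pTmin v) ∧
    (∀ e ∈ (pdatTmin i).1, ∃ v ∈ (pdatTmin i).2, pTmin v = pTmin e ∧ pTmin e < v ∧ v < e) ∧
    (pdatTmin i).1.card = 1 := by
  decide

/-- The 24 critical 1-cells, as elements of `TCell 27 4 T`. -/
def gcell (T : OrderedTree 27) (hT : T.p = pTmin) (i : Fin 24) : TCell 27 4 T where
  edges := (pdatTmin i).1
  verts := (pdatTmin i).2
  edges_ne_root := (critAll i).1
  card_eq := (critAll i).2.1
  vert_not_on_edge := by
    have H := (critAll i).2.2.1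
    rw [← hT] at H
    exact H
  edges_disjoint := by
    have H := (critAll i).2.2.2.1
    rw [← hT] at H
    exact H

lemma gcell_mem (T : OrderedTree 27) (hT : T.p = pTmin) (i : Fin 24) :
    Critical (gcell T hT i) ∧ (gcell T hT i).edges.card = 1 := by
  obtain ⟨h1, h2, h3, h4, h5, h6, h7⟩ := critAll i
  refine ⟨⟨fun v hv => ?_, fun e he => ?_⟩, h7⟩
  · unfold Blocked
    have H := h5 v hv
    rw [← hT] at H
    exact H
  · unfold Disrespectful
    have H := h6 e he
    rw [← hT] at H
    exact H

lemma gcell_inj (T : OrderedTree 27) (hT : T.p = pTmin) :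
    Function.Injective (gcell T hT) := by
  intro i j h
  refine pdatTmin_inj i j (Prod.ext_iff.mpr ⟨?_, ?_⟩)
  · exact congrArg TCell.edges h
  · exact congrArg TCell.verts h

/-- `UD^4(T_min)` has exactly 24 critical 1-cells: 4 choices of disrespectful edge, each
forcing one blocked vertex, times the `6 = multichoose 3 2` ways of distributing the
remaining 2 indistinguishable vertices among the 3 components of the tree minus the
terminal vertex of the edge. -/
theorem critical_one_cells_of_Tmin (T : OrderedTree 27) (hT : T.p = pTmin) :
    {c : TCell 27 4 T | Critical c ∧ c.edges.card = 1}.ncard = 24 ∧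
    24 = 4 * Nat.multichoose 3 2 := by
  constructor
  · have hS : {c : TCell 27 4 T | Critical c ∧ c.edges.card = 1} = Set.range (gcell T hT) := by
      ext c
      constructor
      · intro hc
        obtain ⟨⟨hbl, hdis⟩, hcard⟩ := hc
        obtain ⟨e, he⟩ := Finset.card_eq_one.mp hcard
        have heM : e ∈ c.edges := by rw [he]; exact Finset.mem_singleton_self e
        have hdre := hdis e heM
        unfold Disrespectful at hdre
        rw [hT] at hdre
        obtain ⟨w, hwV, hw1, hw2, hw3⟩ := hdre
        have hew := forcedPairs e w hw1 hw2 hw3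
        have hv3 : c.verts.card = 3 := by
          have h4 := c.card_eq
          rw [hcard] at h4
          omega
        have her : (c.verts.erase w).card = 2 := by
          rw [Finset.card_erase_of_mem hwV, hv3]
        obtain ⟨b, d, hbd, hbdE⟩ := Finset.card_eq_two.mp her
        have hbm : b ∈ c.verts.erase w := by rw [hbdE]; exact Finset.mem_insert_self _ _
        have hdm : d ∈ c.verts.erase w := by rw [hbdE]; simp
        have hbw := (Finset.mem_erase.mp hbm).1
        have hbV := (Finset.mem_erase.mp hbm).2
        have hdw := (Finset.mem_erase.mp hdm).1
        have hdV := (Finset.mem_erase.mp hdm).2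
        have hVeq : c.verts = {w, b, d} := by
          rw [← hbdE]; exact (Finset.insert_erase hwV).symm
        have hbe := c.vert_not_on_edge e heM b hbV
        rw [hT] at hbe
        have hde := c.vert_not_on_edge e heM d hdV
        rw [hT] at hde
        have hBb := hbl b hbV
        have hBd := hbl d hdV
        unfold Blocked at hBb hBd
        rw [hT, he, hVeq] at hBb hBd
        simp only [Finset.mem_insert, Finset.mem_singleton, exists_eq_left] at hBb hBd
        have hpair : (c.edges, c.verts) ∈ pairsTmin := by
          rw [he, hVeq]
          exact keyAll e w hew b d hbd hbw hdw hbe.1 hbe.2 hde.1 hde.2 (by tauto) (by tauto)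
        obtain ⟨n, hn⟩ := List.mem_iff_get.mp hpair
        refine ⟨⟨n.1, n.2⟩, ?_⟩
        have hpd : pdatTmin ⟨n.1, n.2⟩ = (c.edges, c.verts) := hn
        exact TCell.ext' (congrArg Prod.fst hpd) (congrArg Prod.snd hpd)
      · rintro ⟨i, rfl⟩
        exact gcell_mem T hT i
    rw [hS, ← Set.image_univ, Set.ncard_image_of_injective _ (gcell_inj T hT),
      Set.ncard_univ]
    simp
  · rw [Nat.multichoose_eq]
    rfl
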